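/- arXiv:2410.10330 — 5 statements merged into one kernel-verified Lean document; each statement's English description precedes it below -/
import Mathlib

section
/- Let Γ : I → ℝ^{2,3} be a biisotropic curve on an open interval I. Then: (i) for every τ ∈ I, Γ‴(τ) lies in span{Γ′(τ), Γ″(τ)}; (ii) the 2-dimensional subspace V_Γ(τ) := span{Γ′(τ), Γ″(τ)} is totally isotropic (the bilinear form vanishes identically on it) and is independent of τ, i.e. span{Γ′(τ),Γ″(τ)} = span{Γ′(τ₀),Γ″(τ₀)} for all τ, τ₀ ∈ I; (iii) the 3-dimensional subspace W_Γ(τ) := span{Γ(τ), Γ′(τ), Γ″(τ)} is independent of τ, and V_Γ ⊆ W_Γ. -/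
open Set Matrix
open scoped ContDiff

/-- The signature `(2,3)` bilinear form on `ℝ⁵`. -/
noncomputable def ip (X Y : Fin 5 → ℝ) : ℝ :=
  -(X 0 * Y 4 + X 4 * Y 0) - X 1 * Y 1 + X 2 * Y 2 + X 3 * Y 3

noncomputable def ipB : LinearMap.BilinForm ℝ (Fin 5 → ℝ) :=
  LinearMap.mk₂ ℝ ip
    (by intro x y z; simp [ip]; ring) (by intro c x y; simp [ip]; ring)
    (by intro x y z; simp [ip]; ring) (by intro c x y; simp [ip]; ring)

@[simp] lemma ipB_apply (x y : Fin 5 → ℝ) : ipB x y = ip x y := rfl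

lemma ip_comm (x y : Fin 5 → ℝ) : ip x y = ip y x := by simp [ip]; ring

lemma ipB_symm : ipB.IsSymm := ⟨fun x y => by simpa using ip_comm x y⟩

lemma ipB_refl : ipB.IsRefl := ipB_symm.isRefl

lemma ipB_nondegenerate : ipB.Nondegenerate := by
  refine (LinearMap.IsRefl.nondegenerate_iff_separatingLeft ipB_refl).2 ?_
  intro x hx
  funext i
  fin_cases i
  · have := hx (Pi.single 4 1); simp [ip, Pi.single_apply] at this; simpa using this
  · have := hx (Pi.single 1 1); simp [ip, Pi.single_apply] at this; simpa using this
  · have := hx (Pi.single 2 1); simp [ip, Pi.single_apply] at this; simpa using this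
  · have := hx (Pi.single 3 1); simp [ip, Pi.single_apply] at this; simpa using this
  · have := hx (Pi.single 0 1); simp [ip, Pi.single_apply] at this; simpa using this

lemma hasDerivAt_ip {f g : ℝ → Fin 5 → ℝ} {f' g' : Fin 5 → ℝ} {τ : ℝ}
    (hf : HasDerivAt f f' τ) (hg : HasDerivAt g g' τ) :
    HasDerivAt (fun t => ip (f t) (g t)) (ip f' (g τ) + ip (f τ) g') τ := by
  have hfc : ∀ i, HasDerivAt (fun t => f t i) (f' i) τ := fun i =>
    ((ContinuousLinearMap.proj (R := ℝ) (φ := fun _ : Fin 5 => ℝ) i).hasFDerivAt.comp_hasDerivAt τ hf)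
  have hgc : ∀ i, HasDerivAt (fun t => g t i) (g' i) τ := fun i =>
    ((ContinuousLinearMap.proj (R := ℝ) (φ := fun _ : Fin 5 => ℝ) i).hasFDerivAt.comp_hasDerivAt τ hg)
  have := ((((((hfc 0).mul (hgc 4)).add ((hfc 4).mul (hgc 0))).neg.sub
      ((hfc 1).mul (hgc 1))).add ((hfc 2).mul (hgc 2))).add ((hfc 3).mul (hgc 3)))
  convert this using 1
  · rfl
  · rfl
  · funext t; simp [ip]
  · simp [ip]; ring

lemma deriv_rel {a b : ℝ} {f g f' g' : ℝ → Fin 5 → ℝ} {c : ℝ}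
    (hf : ∀ t, HasDerivAt f (f' t) t) (hg : ∀ t, HasDerivAt g (g' t) t)
    (h : ∀ τ ∈ Set.Ioo a b, ip (f τ) (g τ) = c) :
    ∀ τ ∈ Set.Ioo a b, ip (f' τ) (g τ) + ip (f τ) (g' τ) = 0 := by
  intro τ hτ
  have h1 := hasDerivAt_ip (hf τ) (hg τ)
  have h2 : HasDerivAt (fun t => ip (f t) (g t)) 0 τ := by
    have he : (fun t => ip (f t) (g t)) =ᶠ[nhds τ] fun _ => c :=
      Filter.eventuallyEq_of_mem (Ioo_mem_nhds hτ.1 hτ.2) h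
    exact (hasDerivAt_const τ c).congr_of_eventuallyEq he
  exact h1.unique h2

lemma ip_smul_add (a b c d : ℝ) (v w v' w' : Fin 5 → ℝ) :
    ip (a • v + b • w) (c • v' + d • w') =
      a * c * ip v v' + a * d * ip v w' + b * c * ip w v' + b * d * ip w w' := by
  simp [ip]; ring

lemma range23 (u v w : Fin 5 → ℝ) : (Set.range ![u, v, w] : Set (Fin 5 → ℝ)) = {u, v, w} := by
  ext x
  constructor
  · rintro ⟨i, rfl⟩; fin_cases i <;> simp
  · intro h
    simp only [Set.mem_insert_iff, Set.mem_singleton_iff] at h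
    rcases h with rfl | rfl | rfl
    exacts [⟨0, rfl⟩, ⟨1, rfl⟩, ⟨2, rfl⟩]

lemma range2 (v w : Fin 5 → ℝ) : (Set.range ![v, w] : Set (Fin 5 → ℝ)) = {v, w} := by
  ext x
  constructor
  · rintro ⟨i, rfl⟩; fin_cases i <;> simp
  · intro h
    simp only [Set.mem_insert_iff, Set.mem_singleton_iff] at h
    rcases h with rfl | rfl
    exacts [⟨0, rfl⟩, ⟨1, rfl⟩]

/-- The key pointwise linear-algebra lemma. -/
lemma key_span {u v w z : Fin 5 → ℝ}
    (huu : ip u u = 1) (huv : ip u v = 0) (huw : ip u w = 0)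
    (hvv : ip v v = 0) (hvw : ip v w = 0) (hww : ip w w = 0)
    (hzu : ip u z = 0) (hzv : ip v z = 0) (hzw : ip w z = 0)
    (hI : LinearIndependent ℝ ![v, w]) :
    z ∈ Submodule.span ℝ ({v, w} : Set (Fin 5 → ℝ)) ∧
    Module.finrank ℝ ↥(Submodule.span ℝ ({v, w} : Set (Fin 5 → ℝ))) = 2 ∧
    (∀ x ∈ Submodule.span ℝ ({v, w} : Set (Fin 5 → ℝ)),
      ∀ y ∈ Submodule.span ℝ ({v, w} : Set (Fin 5 → ℝ)), ip x y = 0) := by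
  have hwv : ip w v = 0 := (ip_comm w v).trans hvw
  have hiso : ∀ x ∈ Submodule.span ℝ ({v, w} : Set (Fin 5 → ℝ)),
      ∀ y ∈ Submodule.span ℝ ({v, w} : Set (Fin 5 → ℝ)), ip x y = 0 := by
    intro x hx y hy
    rw [Submodule.mem_span_pair] at hx hy
    obtain ⟨a, b, rfl⟩ := hx
    obtain ⟨c, d, rfl⟩ := hy
    rw [ip_smul_add, hvv, hvw, hwv, hww]; ring
  have hunotin : u ∉ Submodule.span ℝ ({v, w} : Set (Fin 5 → ℝ)) := by
    intro hu
    rw [Submodule.mem_span_pair] at hu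
    obtain ⟨a, b, hu⟩ := hu
    rw [← hu, ip_smul_add, hvv, hvw, hwv, hww] at huu
    simp at huu
  have hI3 : LinearIndependent ℝ ![u, v, w] := by
    rw [show (![u, v, w] : Fin 3 → Fin 5 → ℝ) = Fin.cons u ![v, w] from rfl,
      linearIndependent_fin_cons]
    refine ⟨hI, ?_⟩
    rw [range2]; exact hunotin
  have hrank3 : Module.finrank ℝ ↥(Submodule.span ℝ ({u, v, w} : Set (Fin 5 → ℝ))) = 3 := by
    rw [← range23]
    simpa using finrank_span_eq_card hI3
  have hrank2 : Module.finrank ℝ ↥(Submodule.span ℝ ({v, w} : Set (Fin 5 → ℝ))) = 2 := by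
    rw [← range2]
    simpa using finrank_span_eq_card hI
  have horth : ∀ x : Fin 5 → ℝ, ip u x = 0 → ip v x = 0 → ip w x = 0 →
      x ∈ ipB.orthogonal (Submodule.span ℝ ({u, v, w} : Set (Fin 5 → ℝ))) := by
    intro x h1 h2 h3
    rw [LinearMap.BilinForm.mem_orthogonal_iff]
    intro n hn
    induction hn using Submodule.span_induction with
    | mem y hy =>
      simp only [Set.mem_insert_iff, Set.mem_singleton_iff] at hy
      rcases hy with rfl | rfl | rfl
      · exact h1
      · exact h2
      · exact h3
    | zero => exact ipB.isOrtho_zero_left x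
    | add y₁ y₂ _ _ hy₁ hy₂ =>
      rw [map_add, LinearMap.add_apply, hy₁, hy₂, add_zero]
    | smul c y _ hy =>
      rw [_root_.map_smul, LinearMap.smul_apply, hy, smul_zero]
  have hVle : Submodule.span ℝ ({v, w} : Set (Fin 5 → ℝ)) ≤
      ipB.orthogonal (Submodule.span ℝ ({u, v, w} : Set (Fin 5 → ℝ))) := by
    rw [Submodule.span_le]
    intro x hx
    simp only [Set.mem_insert_iff, Set.mem_singleton_iff] at hx
    rcases hx with rfl | rfl
    · exact horth _ huv hvv hwv
    · exact horth _ huw hvw hww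
  have hrankO : Module.finrank ℝ
      ↥(ipB.orthogonal (Submodule.span ℝ ({u, v, w} : Set (Fin 5 → ℝ)))) = 2 := by
    rw [LinearMap.BilinForm.finrank_orthogonal ipB_nondegenerate, hrank3]
    simp
  have hVeq : Submodule.span ℝ ({v, w} : Set (Fin 5 → ℝ)) =
      ipB.orthogonal (Submodule.span ℝ ({u, v, w} : Set (Fin 5 → ℝ))) :=
    Submodule.eq_of_le_of_finrank_le hVle (by rw [hrankO, hrank2])
  refine ⟨?_, hrank2, hiso⟩
  rw [hVeq]
  exact horth z hzu hzv hzw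

section gron
variable {E : Type*} [NormedAddCommGroup E] [NormedSpace ℝ E]

lemma fwd_zero {F F' : ℝ → E} {c d K : ℝ} (hcd : c ≤ d)
    (hF : ∀ t ∈ Icc c d, HasDerivAt F (F' t) t)
    (hb : ∀ t ∈ Icc c d, ‖F' t‖ ≤ K * ‖F t‖) (h0 : F c = 0) : F d = 0 := by
  have hcont : ContinuousOn F (Icc c d) := fun t ht => (hF t ht).continuousAt.continuousWithinAt
  have := norm_le_gronwallBound_of_norm_deriv_right_le (δ := 0) (ε := 0) (K := K) hcont
    (fun t ht => (hF t (Ico_subset_Icc_self ht)).hasDerivWithinAt)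
    (by simp [h0]) (fun t ht => by simpa using hb t (Ico_subset_Icc_self ht))
  have hd := this d (right_mem_Icc.2 hcd)
  rw [gronwallBound_ε0_δ0] at hd
  simpa using norm_le_zero_iff.mp hd

lemma bwd_zero {F F' : ℝ → E} {c d K : ℝ} (hcd : c ≤ d)
    (hF : ∀ t ∈ Icc c d, HasDerivAt F (F' t) t)
    (hb : ∀ t ∈ Icc c d, ‖F' t‖ ≤ K * ‖F t‖) (h0 : F d = 0) : F c = 0 := by
  set G : ℝ → E := fun t => F (c + d - t) with hG
  have hmem : ∀ t ∈ Icc c d, c + d - t ∈ Icc c d := by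
    intro t ht; cases' ht with h1 h2; constructor <;> linarith
  have hGd : ∀ t ∈ Icc c d, HasDerivAt G (-F' (c + d - t)) t := by
    intro t ht
    have hg : HasDerivAt (fun t : ℝ => c + d - t) (-1) t := by
      simpa using (hasDerivAt_id t).const_sub (c + d)
    have := (hF _ (hmem t ht)).scomp t hg
    simpa [G, Function.comp_def] using this
  have := fwd_zero (F := G) (F' := fun t => -F' (c + d - t)) (K := K) hcd hGd
    (fun t ht => by simpa using hb _ (hmem t ht)) (by simpa [hG] using h0)
  simpa [hG] using this

lemma pair_zero {y z : ℝ → E} {α β : ℝ → ℝ} {c d : ℝ}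
    (hy : ∀ t ∈ uIcc c d, HasDerivAt y (z t) t)
    (hz : ∀ t ∈ uIcc c d, HasDerivAt z (α t • y t + β t • z t) t)
    (hα : ContinuousOn α (uIcc c d)) (hβ : ContinuousOn β (uIcc c d))
    (h0 : y c = 0 ∧ z c = 0) : y d = 0 ∧ z d = 0 := by
  obtain ⟨A, hA⟩ := isCompact_uIcc.exists_bound_of_continuousOn hα
  obtain ⟨B, hB⟩ := isCompact_uIcc.exists_bound_of_continuousOn hβ
  set K : ℝ := 1 + A + B with hK
  set F : ℝ → E × E := fun t => (y t, z t) with hF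
  set F' : ℝ → E × E := fun t => (z t, α t • y t + β t • z t) with hF'
  have hAnn : 0 ≤ A := le_trans (norm_nonneg _) (hA c left_mem_uIcc)
  have hBnn : 0 ≤ B := le_trans (norm_nonneg _) (hB c left_mem_uIcc)
  have hFd : ∀ t ∈ uIcc c d, HasDerivAt F (F' t) t := fun t ht => (hy t ht).prodMk (hz t ht)
  have hbound : ∀ t ∈ uIcc c d, ‖F' t‖ ≤ K * ‖F t‖ := by
    intro t ht
    rw [Prod.norm_def]
    have h1 : ‖y t‖ ≤ ‖F t‖ := norm_fst_le (F t)
    have h2 : ‖z t‖ ≤ ‖F t‖ := norm_snd_le (F t)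
    have hK1 : 1 ≤ K := by simp [hK]; linarith
    refine max_le (le_trans h2 ?_) ?_
    · nlinarith [norm_nonneg (F t)]
    · calc ‖α t • y t + β t • z t‖ ≤ ‖α t‖ * ‖y t‖ + ‖β t‖ * ‖z t‖ := by
            refine (norm_add_le _ _).trans ?_
            simp [norm_smul]
      _ ≤ A * ‖F t‖ + B * ‖F t‖ := by
            have := hA t ht; have := hB t ht
            gcongr
      _ ≤ K * ‖F t‖ := by nlinarith [norm_nonneg (F t)]
  have hfin : F d = 0 := by
    rcases le_total c d with h | h
    · rw [uIcc_of_le h] at hFd hbound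
      exact fwd_zero h hFd hbound (by simp [hF, h0.1, h0.2, Prod.ext_iff])
    · rw [uIcc_of_ge h] at hFd hbound
      exact bwd_zero h hFd hbound (by simp [hF, h0.1, h0.2, Prod.ext_iff])
  constructor
  · have := congrArg Prod.fst hfin; simpa [hF] using this
  · have := congrArg Prod.snd hfin; simpa [hF] using this

lemma triple_zero {x y z : ℝ → E} {α β : ℝ → ℝ} {c d : ℝ}
    (hx : ∀ t ∈ uIcc c d, HasDerivAt x (y t) t)
    (hy : ∀ t ∈ uIcc c d, HasDerivAt y (z t) t)
    (hz : ∀ t ∈ uIcc c d, HasDerivAt z (α t • y t + β t • z t) t)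
    (hα : ContinuousOn α (uIcc c d)) (hβ : ContinuousOn β (uIcc c d))
    (h0 : x c = 0 ∧ y c = 0 ∧ z c = 0) : x d = 0 ∧ y d = 0 ∧ z d = 0 := by
  obtain ⟨A, hA⟩ := isCompact_uIcc.exists_bound_of_continuousOn hα
  obtain ⟨B, hB⟩ := isCompact_uIcc.exists_bound_of_continuousOn hβ
  set K : ℝ := 1 + A + B with hK
  set F : ℝ → E × E × E := fun t => (x t, y t, z t) with hF
  set F' : ℝ → E × E × E := fun t => (y t, z t, α t • y t + β t • z t) with hF'
  have hAnn : 0 ≤ A := le_trans (norm_nonneg _) (hA c left_mem_uIcc)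
  have hBnn : 0 ≤ B := le_trans (norm_nonneg _) (hB c left_mem_uIcc)
  have hFd : ∀ t ∈ uIcc c d, HasDerivAt F (F' t) t := fun t ht =>
    (hx t ht).prodMk ((hy t ht).prodMk (hz t ht))
  have hbound : ∀ t ∈ uIcc c d, ‖F' t‖ ≤ K * ‖F t‖ := by
    intro t ht
    have h1 : ‖y t‖ ≤ ‖F t‖ := le_trans (norm_fst_le (y t, z t)) (norm_snd_le (F t))
    have h2 : ‖z t‖ ≤ ‖F t‖ := le_trans (norm_snd_le (y t, z t)) (norm_snd_le (F t))
    have hK1 : 1 ≤ K := by simp [hK]; linarith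
    rw [Prod.norm_def]
    refine max_le (le_trans h1 ?_) ?_
    · nlinarith [norm_nonneg (F t)]
    rw [Prod.norm_def]
    refine max_le (le_trans h2 ?_) ?_
    · nlinarith [norm_nonneg (F t)]
    · calc ‖α t • y t + β t • z t‖ ≤ ‖α t‖ * ‖y t‖ + ‖β t‖ * ‖z t‖ := by
            refine (norm_add_le _ _).trans ?_
            simp [norm_smul]
      _ ≤ A * ‖F t‖ + B * ‖F t‖ := by
            have := hA t ht; have := hB t ht
            gcongr
      _ ≤ K * ‖F t‖ := by nlinarith [norm_nonneg (F t)]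
  have hfin : F d = 0 := by
    rcases le_total c d with h | h
    · rw [uIcc_of_le h] at hFd hbound
      exact fwd_zero h hFd hbound (by simp [hF, h0.1, h0.2.1, h0.2.2, Prod.ext_iff])
    · rw [uIcc_of_ge h] at hFd hbound
      exact bwd_zero h hFd hbound (by simp [hF, h0.1, h0.2.1, h0.2.2, Prod.ext_iff])
  refine ⟨?_, ?_, ?_⟩
  · have := congrArg Prod.fst hfin; simpa [hF] using this
  · have := congrArg (fun p : E × E × E => p.2.1) hfin; simpa [hF] using this
  · have := congrArg (fun p : E × E × E => p.2.2) hfin; simpa [hF] using this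
end gron

lemma cont_dot {f g : ℝ → Fin 5 → ℝ} (hf : Continuous f) (hg : Continuous g) :
    Continuous (fun t => f t ⬝ᵥ g t) := by
  unfold dotProduct
  exact continuous_finset_sum _ fun i _ =>
    ((continuous_apply i).comp hf).mul ((continuous_apply i).comp hg)

lemma gram_ne_zero {v w : Fin 5 → ℝ} (hI : LinearIndependent ℝ ![v, w]) :
    v ⬝ᵥ v * (w ⬝ᵥ w) - (v ⬝ᵥ w) ^ 2 ≠ 0 := by
  rw [linearIndependent_fin2] at hI
  simp only [Matrix.cons_val_one, Matrix.head_cons, Matrix.cons_val_zero] at hI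
  intro hN
  have hww : w ⬝ᵥ w ≠ 0 := fun h => hI.1 ((dotProduct_self_eq_zero).mp h)
  set c : ℝ := v ⬝ᵥ w / (w ⬝ᵥ w) with hc
  have expand : (v - c • w) ⬝ᵥ (v - c • w) =
      v ⬝ᵥ v - 2 * c * (v ⬝ᵥ w) + c ^ 2 * (w ⬝ᵥ w) := by
    simp [sub_dotProduct, dotProduct_sub, smul_dotProduct, dotProduct_smul,
      dotProduct_comm w v, smul_eq_mul]
    ring
  have hz : (v - c • w) ⬝ᵥ (v - c • w) = 0 := by
    rw [expand, hc]
    field_simp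
    linear_combination hN
  rw [dotProduct_self_eq_zero, sub_eq_zero] at hz
  exact hI.2 c hz.symm

lemma cramer_coeffs {v w z : Fin 5 → ℝ} {a b : ℝ} (h : z = a • v + b • w)
    (hN : v ⬝ᵥ v * (w ⬝ᵥ w) - (v ⬝ᵥ w) ^ 2 ≠ 0) :
    a = (z ⬝ᵥ v * (w ⬝ᵥ w) - z ⬝ᵥ w * (v ⬝ᵥ w)) / (v ⬝ᵥ v * (w ⬝ᵥ w) - (v ⬝ᵥ w) ^ 2) ∧
    b = (z ⬝ᵥ w * (v ⬝ᵥ v) - z ⬝ᵥ v * (v ⬝ᵥ w)) / (v ⬝ᵥ v * (w ⬝ᵥ w) - (v ⬝ᵥ w) ^ 2) := by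
  have e1 : z ⬝ᵥ v = a * (v ⬝ᵥ v) + b * (v ⬝ᵥ w) := by
    rw [h]
    simp [add_dotProduct, smul_dotProduct, smul_eq_mul, dotProduct_comm w v]
  have e2 : z ⬝ᵥ w = a * (v ⬝ᵥ w) + b * (w ⬝ᵥ w) := by
    rw [h]
    simp [add_dotProduct, smul_dotProduct, smul_eq_mul]
  constructor
  · rw [eq_div_iff hN]
    linear_combination (v ⬝ᵥ w) * e2 - (w ⬝ᵥ w) * e1
  · field_simp
    linear_combination (v ⬝ᵥ w) * e1 - (v ⬝ᵥ v) * e2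

/-- ODE engine: the span of `{Γ1 τ, Γ2 τ}` is monotone-constant in `τ`. -/
lemma span_pair_le {a b : ℝ} {Γ1 Γ2 Γ3 : ℝ → Fin 5 → ℝ} {α β : ℝ → ℝ}
    (hd1 : ∀ t, HasDerivAt Γ1 (Γ2 t) t) (hd2 : ∀ t, HasDerivAt Γ2 (Γ3 t) t)
    (hrel : ∀ τ ∈ Set.Ioo a b, Γ3 τ = α τ • Γ1 τ + β τ • Γ2 τ)
    (hα : ContinuousOn α (Set.Ioo a b)) (hβ : ContinuousOn β (Set.Ioo a b))
    {τ τ₀ : ℝ} (hτ : τ ∈ Set.Ioo a b) (hτ₀ : τ₀ ∈ Set.Ioo a b) :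
    Submodule.span ℝ ({Γ1 τ, Γ2 τ} : Set (Fin 5 → ℝ)) ≤
      Submodule.span ℝ ({Γ1 τ₀, Γ2 τ₀} : Set (Fin 5 → ℝ)) := by
  set V₀ : Submodule ℝ (Fin 5 → ℝ) := Submodule.span ℝ ({Γ1 τ₀, Γ2 τ₀} : Set (Fin 5 → ℝ))
  haveI : IsClosed (V₀ : Set (Fin 5 → ℝ)) := Submodule.closed_of_finiteDimensional V₀
  set qc : (Fin 5 → ℝ) →L[ℝ] ((Fin 5 → ℝ) ⧸ V₀) := LinearMap.toContinuousLinearMap V₀.mkQ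
    with hqc
  have hsub : uIcc τ₀ τ ⊆ Set.Ioo a b := Set.ordConnected_Ioo.uIcc_subset hτ₀ hτ
  have key := pair_zero (y := fun t => qc (Γ1 t)) (z := fun t => qc (Γ2 t))
    (α := α) (β := β) (c := τ₀) (d := τ)
    (fun t _ => qc.hasFDerivAt.comp_hasDerivAt t (hd1 t))
    (fun t ht => by
      have h := qc.hasFDerivAt.comp_hasDerivAt t (hd2 t)
      have : qc (Γ3 t) = α t • qc (Γ1 t) + β t • qc (Γ2 t) := by
        rw [hrel t (hsub ht)]; simp
      rwa [this] at h)
    (hα.mono hsub) (hβ.mono hsub)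
    (⟨(Submodule.Quotient.mk_eq_zero V₀).mpr (Submodule.subset_span (by simp)),
      (Submodule.Quotient.mk_eq_zero V₀).mpr (Submodule.subset_span (by simp))⟩)
  rw [Submodule.span_le]
  intro x hx
  simp only [Set.mem_insert_iff, Set.mem_singleton_iff] at hx
  rcases hx with rfl | rfl
  · exact (Submodule.Quotient.mk_eq_zero V₀).mp key.1
  · exact (Submodule.Quotient.mk_eq_zero V₀).mp key.2

/-- ODE engine for the triple span. -/
lemma span_triple_le {a b : ℝ} {Γ0 Γ1 Γ2 Γ3 : ℝ → Fin 5 → ℝ} {α β : ℝ → ℝ}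
    (hd0 : ∀ t, HasDerivAt Γ0 (Γ1 t) t)
    (hd1 : ∀ t, HasDerivAt Γ1 (Γ2 t) t) (hd2 : ∀ t, HasDerivAt Γ2 (Γ3 t) t)
    (hrel : ∀ τ ∈ Set.Ioo a b, Γ3 τ = α τ • Γ1 τ + β τ • Γ2 τ)
    (hα : ContinuousOn α (Set.Ioo a b)) (hβ : ContinuousOn β (Set.Ioo a b))
    {τ τ₀ : ℝ} (hτ : τ ∈ Set.Ioo a b) (hτ₀ : τ₀ ∈ Set.Ioo a b) :
    Submodule.span ℝ ({Γ0 τ, Γ1 τ, Γ2 τ} : Set (Fin 5 → ℝ)) ≤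
      Submodule.span ℝ ({Γ0 τ₀, Γ1 τ₀, Γ2 τ₀} : Set (Fin 5 → ℝ)) := by
  set V₀ : Submodule ℝ (Fin 5 → ℝ) := Submodule.span ℝ ({Γ0 τ₀, Γ1 τ₀, Γ2 τ₀} : Set (Fin 5 → ℝ))
  haveI : IsClosed (V₀ : Set (Fin 5 → ℝ)) := Submodule.closed_of_finiteDimensional V₀
  set qc : (Fin 5 → ℝ) →L[ℝ] ((Fin 5 → ℝ) ⧸ V₀) := LinearMap.toContinuousLinearMap V₀.mkQ
    with hqc
  have hsub : uIcc τ₀ τ ⊆ Set.Ioo a b := Set.ordConnected_Ioo.uIcc_subset hτ₀ hτ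
  have key := triple_zero (x := fun t => qc (Γ0 t)) (y := fun t => qc (Γ1 t))
    (z := fun t => qc (Γ2 t)) (α := α) (β := β) (c := τ₀) (d := τ)
    (fun t _ => qc.hasFDerivAt.comp_hasDerivAt t (hd0 t))
    (fun t _ => qc.hasFDerivAt.comp_hasDerivAt t (hd1 t))
    (fun t ht => by
      have h := qc.hasFDerivAt.comp_hasDerivAt t (hd2 t)
      have : qc (Γ3 t) = α t • qc (Γ1 t) + β t • qc (Γ2 t) := by
        rw [hrel t (hsub ht)]; simp
      rwa [this] at h)
    (hα.mono hsub) (hβ.mono hsub)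
    (⟨(Submodule.Quotient.mk_eq_zero V₀).mpr (Submodule.subset_span (by simp)),
      (Submodule.Quotient.mk_eq_zero V₀).mpr (Submodule.subset_span (by simp)),
      (Submodule.Quotient.mk_eq_zero V₀).mpr (Submodule.subset_span (by simp))⟩)
  rw [Submodule.span_le]
  intro x hx
  simp only [Set.mem_insert_iff, Set.mem_singleton_iff] at hx
  rcases hx with rfl | rfl | rfl
  · exact (Submodule.Quotient.mk_eq_zero V₀).mp key.1
  · exact (Submodule.Quotient.mk_eq_zero V₀).mp key.2.1
  · exact (Submodule.Quotient.mk_eq_zero V₀).mp key.2.2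

/-- for a biisotropic curve `Γ` in `ℝ^{2,3}`:
(i) `Γ‴(τ) ∈ span{Γ′(τ), Γ″(τ)}`;
(ii) `V_Γ(τ) = span{Γ′(τ), Γ″(τ)}` is 2-dimensional, totally isotropic and independent of `τ`;
(iii) `W_Γ(τ) = span{Γ(τ), Γ′(τ), Γ″(τ)}` is independent of `τ`, and `V_Γ ⊆ W_Γ`. -/
theorem stmt1 (a b : ℝ) (Γ : ℝ → Fin 5 → ℝ)
    (hΓ : ContDiff ℝ (⊤ : ℕ∞) Γ)
    (h1 : ∀ τ ∈ Set.Ioo a b, ip (Γ τ) (Γ τ) = 1)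
    (h2 : ∀ τ ∈ Set.Ioo a b, ip (deriv Γ τ) (deriv Γ τ) = 0)
    (h3 : ∀ τ ∈ Set.Ioo a b, ip (deriv (deriv Γ) τ) (deriv (deriv Γ) τ) = 0)
    (h4 : ∀ τ ∈ Set.Ioo a b, LinearIndependent ℝ ![deriv Γ τ, deriv (deriv Γ) τ]) :
    -- (i)
    (∀ τ ∈ Set.Ioo a b,
      deriv (deriv (deriv Γ)) τ ∈
        Submodule.span ℝ {deriv Γ τ, deriv (deriv Γ) τ}) ∧
    -- (ii)
    (∀ τ ∈ Set.Ioo a b,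
      Module.finrank ℝ ↥(Submodule.span ℝ ({deriv Γ τ, deriv (deriv Γ) τ} : Set (Fin 5 → ℝ))) = 2 ∧
      (∀ v ∈ Submodule.span ℝ ({deriv Γ τ, deriv (deriv Γ) τ} : Set (Fin 5 → ℝ)),
        ∀ w ∈ Submodule.span ℝ ({deriv Γ τ, deriv (deriv Γ) τ} : Set (Fin 5 → ℝ)),
        ip v w = 0)) ∧
    (∀ τ ∈ Set.Ioo a b, ∀ τ₀ ∈ Set.Ioo a b,
      Submodule.span ℝ ({deriv Γ τ, deriv (deriv Γ) τ} : Set (Fin 5 → ℝ)) =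
        Submodule.span ℝ ({deriv Γ τ₀, deriv (deriv Γ) τ₀} : Set (Fin 5 → ℝ))) ∧
    -- (iii)
    (∀ τ ∈ Set.Ioo a b, ∀ τ₀ ∈ Set.Ioo a b,
      Submodule.span ℝ ({Γ τ, deriv Γ τ, deriv (deriv Γ) τ} : Set (Fin 5 → ℝ)) =
        Submodule.span ℝ ({Γ τ₀, deriv Γ τ₀, deriv (deriv Γ) τ₀} : Set (Fin 5 → ℝ))) ∧
    (∀ τ ∈ Set.Ioo a b,
      Submodule.span ℝ ({deriv Γ τ, deriv (deriv Γ) τ} : Set (Fin 5 → ℝ)) ≤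
        Submodule.span ℝ ({Γ τ, deriv Γ τ, deriv (deriv Γ) τ} : Set (Fin 5 → ℝ))) := by
  have hΓ0 : ContDiff ℝ ∞ Γ := hΓ.of_le (by simp)
  have hΓ1 : ContDiff ℝ ∞ (deriv Γ) := (contDiff_infty_iff_deriv.mp hΓ0).2
  have hΓ2 : ContDiff ℝ ∞ (deriv (deriv Γ)) := (contDiff_infty_iff_deriv.mp hΓ1).2
  have hΓ3 : ContDiff ℝ ∞ (deriv (deriv (deriv Γ))) := (contDiff_infty_iff_deriv.mp hΓ2).2
  have hd0 : ∀ t, HasDerivAt Γ (deriv Γ t) t := fun t =>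
    ((contDiff_infty_iff_deriv.mp hΓ0).1 t).hasDerivAt
  have hd1 : ∀ t, HasDerivAt (deriv Γ) (deriv (deriv Γ) t) t := fun t =>
    ((contDiff_infty_iff_deriv.mp hΓ1).1 t).hasDerivAt
  have hd2 : ∀ t, HasDerivAt (deriv (deriv Γ)) (deriv (deriv (deriv Γ)) t) t := fun t =>
    ((contDiff_infty_iff_deriv.mp hΓ2).1 t).hasDerivAt
  -- orthogonality relations
  have o01 : ∀ τ ∈ Set.Ioo a b, ip (Γ τ) (deriv Γ τ) = 0 := by
    intro τ hτ
    have h := deriv_rel hd0 hd0 h1 τ hτ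
    have hc := ip_comm (deriv Γ τ) (Γ τ)
    linarith
  have o02 : ∀ τ ∈ Set.Ioo a b, ip (Γ τ) (deriv (deriv Γ) τ) = 0 := by
    intro τ hτ
    have h := deriv_rel hd0 hd1 o01 τ hτ
    have := h2 τ hτ
    linarith
  have o12 : ∀ τ ∈ Set.Ioo a b, ip (deriv Γ τ) (deriv (deriv Γ) τ) = 0 := by
    intro τ hτ
    have h := deriv_rel hd1 hd1 h2 τ hτ
    have hc := ip_comm (deriv (deriv Γ) τ) (deriv Γ τ)
    linarith
  have o13 : ∀ τ ∈ Set.Ioo a b, ip (deriv Γ τ) (deriv (deriv (deriv Γ)) τ) = 0 := by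
    intro τ hτ
    have h := deriv_rel hd1 hd2 o12 τ hτ
    have := h3 τ hτ
    linarith
  have o23 : ∀ τ ∈ Set.Ioo a b, ip (deriv (deriv Γ) τ) (deriv (deriv (deriv Γ)) τ) = 0 := by
    intro τ hτ
    have h := deriv_rel hd2 hd2 h3 τ hτ
    have hc := ip_comm (deriv (deriv (deriv Γ)) τ) (deriv (deriv Γ) τ)
    linarith
  have o03 : ∀ τ ∈ Set.Ioo a b, ip (Γ τ) (deriv (deriv (deriv Γ)) τ) = 0 := by
    intro τ hτ
    have h := deriv_rel hd0 hd2 o02 τ hτ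
    have := o12 τ hτ
    linarith
  have keyτ := fun τ (hτ : τ ∈ Set.Ioo a b) =>
    key_span (h1 τ hτ) (o01 τ hτ) (o02 τ hτ) (h2 τ hτ) (o12 τ hτ) (h3 τ hτ)
      (o03 τ hτ) (o13 τ hτ) (o23 τ hτ) (h4 τ hτ)
  -- coefficient functions
  set α : ℝ → ℝ := fun t =>
    (deriv (deriv (deriv Γ)) t ⬝ᵥ deriv Γ t * (deriv (deriv Γ) t ⬝ᵥ deriv (deriv Γ) t) -
        deriv (deriv (deriv Γ)) t ⬝ᵥ deriv (deriv Γ) t * (deriv Γ t ⬝ᵥ deriv (deriv Γ) t)) /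
      (deriv Γ t ⬝ᵥ deriv Γ t * (deriv (deriv Γ) t ⬝ᵥ deriv (deriv Γ) t) -
        (deriv Γ t ⬝ᵥ deriv (deriv Γ) t) ^ 2) with hα
  set β : ℝ → ℝ := fun t =>
    (deriv (deriv (deriv Γ)) t ⬝ᵥ deriv (deriv Γ) t * (deriv Γ t ⬝ᵥ deriv Γ t) -
        deriv (deriv (deriv Γ)) t ⬝ᵥ deriv Γ t * (deriv Γ t ⬝ᵥ deriv (deriv Γ) t)) /
      (deriv Γ t ⬝ᵥ deriv Γ t * (deriv (deriv Γ) t ⬝ᵥ deriv (deriv Γ) t) -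
        (deriv Γ t ⬝ᵥ deriv (deriv Γ) t) ^ 2) with hβ
  have hrel : ∀ τ ∈ Set.Ioo a b,
      deriv (deriv (deriv Γ)) τ = α τ • deriv Γ τ + β τ • deriv (deriv Γ) τ := by
    intro τ hτ
    have hz := (keyτ τ hτ).1
    rw [Submodule.mem_span_pair] at hz
    obtain ⟨A, B, hAB⟩ := hz
    obtain ⟨hA, hB⟩ := cramer_coeffs hAB.symm (gram_ne_zero (h4 τ hτ))
    rw [← hAB, hA, hB]
  have hαc : ContinuousOn α (Set.Ioo a b) := by
    apply ContinuousOn.div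
    · exact (((cont_dot hΓ3.continuous hΓ1.continuous).mul
        (cont_dot hΓ2.continuous hΓ2.continuous)).sub
        ((cont_dot hΓ3.continuous hΓ2.continuous).mul
        (cont_dot hΓ1.continuous hΓ2.continuous))).continuousOn
    · exact (((cont_dot hΓ1.continuous hΓ1.continuous).mul
        (cont_dot hΓ2.continuous hΓ2.continuous)).sub
        ((cont_dot hΓ1.continuous hΓ2.continuous).pow 2)).continuousOn
    · exact fun τ hτ => gram_ne_zero (h4 τ hτ)
  have hβc : ContinuousOn β (Set.Ioo a b) := by
    apply ContinuousOn.div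
    · exact (((cont_dot hΓ3.continuous hΓ2.continuous).mul
        (cont_dot hΓ1.continuous hΓ1.continuous)).sub
        ((cont_dot hΓ3.continuous hΓ1.continuous).mul
        (cont_dot hΓ1.continuous hΓ2.continuous))).continuousOn
    · exact (((cont_dot hΓ1.continuous hΓ1.continuous).mul
        (cont_dot hΓ2.continuous hΓ2.continuous)).sub
        ((cont_dot hΓ1.continuous hΓ2.continuous).pow 2)).continuousOn
    · exact fun τ hτ => gram_ne_zero (h4 τ hτ)
  refine ⟨fun τ hτ => (keyτ τ hτ).1,
    fun τ hτ => ⟨(keyτ τ hτ).2.1, (keyτ τ hτ).2.2⟩,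
    fun τ hτ τ₀ hτ₀ => le_antisymm
      (span_pair_le hd1 hd2 hrel hαc hβc hτ hτ₀)
      (span_pair_le hd1 hd2 hrel hαc hβc hτ₀ hτ),
    fun τ hτ τ₀ hτ₀ => le_antisymm
      (span_triple_le hd0 hd1 hd2 hrel hαc hβc hτ hτ₀)
      (span_triple_le hd0 hd1 hd2 hrel hαc hβc hτ₀ hτ),
    fun τ hτ => Submodule.span_mono (Set.subset_insert _ _)⟩
end

section
/- Let I ⊆ ℝ be an open interval and x, y : I → ℝ smooth functions with x′y″ − x″y′ = 1 identically. Set Γ := E₃ + x(E₁ − E₂) + yE₄, υ² := (x′)² + (y′)² (which is everywhere positive), μ := xy′ − x′y, and define R := −x′E₀ + (1/2)y′(E₁ + E₂) + (μ²/(2υ²))y′(E₁ − E₂) + μE₃ − (μ²/(2υ²))x′E₄. Then Γ is a biisotropic curve and R satisfies ⟨R,R⟩ = ⟨R,Γ⟩ = ⟨R,Γ′⟩ = 0 and ⟨R,Γ″⟩ = 1 identically on I, i.e. R is an isotropic normal vector field along Γ. -/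
/-- `Γ = E₃ + x(E₁ − E₂) + yE₄` in coordinates. -/
noncomputable def GamXY (x y : ℝ → ℝ) (s : ℝ) : Fin 5 → ℝ :=
  ![0, x s, -(x s), 1, y s]

/-- The isotropic normal vector field
`R = −x′E₀ + (1/2)y′(E₁+E₂) + (μ²/(2υ²))y′(E₁−E₂) + μE₃ − (μ²/(2υ²))x′E₄`. -/
noncomputable def RXY (x y : ℝ → ℝ) (s : ℝ) : Fin 5 → ℝ :=
  ![-(deriv x s),
    (1 / 2) * deriv y s +
      ((x s * deriv y s - deriv x s * y s) ^ 2 / (2 * ((deriv x s) ^ 2 + (deriv y s) ^ 2))) *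
        deriv y s,
    (1 / 2) * deriv y s -
      ((x s * deriv y s - deriv x s * y s) ^ 2 / (2 * ((deriv x s) ^ 2 + (deriv y s) ^ 2))) *
        deriv y s,
    x s * deriv y s - deriv x s * y s,
    -(((x s * deriv y s - deriv x s * y s) ^ 2 / (2 * ((deriv x s) ^ 2 + (deriv y s) ^ 2))) *
        deriv x s)]

lemma deriv_vec5 (f0 f1 f2 f3 f4 : ℝ → ℝ) (s : ℝ)
    (h0 : DifferentiableAt ℝ f0 s) (h1 : DifferentiableAt ℝ f1 s)
    (h2 : DifferentiableAt ℝ f2 s) (h3 : DifferentiableAt ℝ f3 s)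
    (h4 : DifferentiableAt ℝ f4 s) :
    deriv (fun t => ![f0 t, f1 t, f2 t, f3 t, f4 t]) s
      = ![deriv f0 s, deriv f1 s, deriv f2 s, deriv f3 s, deriv f4 s] := by
  rw [deriv_pi]
  · funext i; fin_cases i <;> simp
  · intro i; fin_cases i <;> simp [h0, h1, h2, h3, h4]

lemma deriv_Gam (x y : ℝ → ℝ) (hx : ContDiff ℝ (⊤ : ℕ∞) x) (hy : ContDiff ℝ (⊤ : ℕ∞) y) :
    deriv (GamXY x y) = fun s => ![0, deriv x s, -(deriv x s), 0, deriv y s] := by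
  funext s
  have hxd := hx.differentiable (by simp) s
  have hyd := hy.differentiable (by simp) s
  have : GamXY x y = fun t => ![(fun _ : ℝ => (0:ℝ)) t, x t, (fun t => -(x t)) t,
      (fun _ : ℝ => (1:ℝ)) t, y t] := rfl
  rw [this, deriv_vec5 _ _ (fun t => -(x t)) _ _ s (by fun_prop) hxd (hxd.neg) (by fun_prop) hyd]
  simp

lemma deriv2_Gam (x y : ℝ → ℝ) (hx : ContDiff ℝ (⊤ : ℕ∞) x) (hy : ContDiff ℝ (⊤ : ℕ∞) y) :
    deriv (deriv (GamXY x y)) = fun s =>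
      ![0, deriv (deriv x) s, -(deriv (deriv x) s), 0, deriv (deriv y) s] := by
  have hx' : ContDiff ℝ (⊤ : ℕ∞) (deriv x) := (contDiff_succ_iff_deriv.mp (by simpa using hx)).2.2
  have hy' : ContDiff ℝ (⊤ : ℕ∞) (deriv y) := (contDiff_succ_iff_deriv.mp (by simpa using hy)).2.2
  rw [deriv_Gam x y hx hy]
  funext s
  have hxd := hx'.differentiable (by simp) s
  have hyd := hy'.differentiable (by simp) s
  have : (fun s => ![(0:ℝ), deriv x s, -(deriv x s), 0, deriv y s])
      = fun t => ![(fun _ : ℝ => (0:ℝ)) t, deriv x t, (fun t => -(deriv x t)) t,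
          (fun _ : ℝ => (0:ℝ)) t, deriv y t] := rfl
  rw [this, deriv_vec5 _ _ (fun t => -(deriv x t)) _ _ s (by fun_prop) hxd (hxd.neg) (by fun_prop) hyd]
  simp

/-- if `x, y` are smooth with `x′y″ − x″y′ = 1` on an open interval, then
`Γ := E₃ + x(E₁−E₂) + yE₄` is biisotropic, `υ² := (x′)² + (y′)²` is everywhere positive,
and `R` is an isotropic normal vector field along `Γ`. -/
theorem stmt3 (a b : ℝ) (x y : ℝ → ℝ)
    (hx : ContDiff ℝ (⊤ : ℕ∞) x) (hy : ContDiff ℝ (⊤ : ℕ∞) y)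
    (huni : ∀ s ∈ Set.Ioo a b,
      deriv x s * deriv (deriv y) s - deriv (deriv x) s * deriv y s = 1) :
    ∀ s ∈ Set.Ioo a b,
      -- `Γ` is biisotropic
      ip (GamXY x y s) (GamXY x y s) = 1 ∧
      ip (deriv (GamXY x y) s) (deriv (GamXY x y) s) = 0 ∧
      ip (deriv (deriv (GamXY x y)) s) (deriv (deriv (GamXY x y)) s) = 0 ∧
      LinearIndependent ℝ ![deriv (GamXY x y) s, deriv (deriv (GamXY x y)) s] ∧
      -- `υ²` is everywhere positive
      (deriv x s) ^ 2 + (deriv y s) ^ 2 > 0 ∧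
      -- `R` is an isotropic normal vector field along `Γ`
      ip (RXY x y s) (RXY x y s) = 0 ∧
      ip (RXY x y s) (GamXY x y s) = 0 ∧
      ip (RXY x y s) (deriv (GamXY x y) s) = 0 ∧
      ip (RXY x y s) (deriv (deriv (GamXY x y)) s) = 1 := by

  intro s hs
  have hu := huni s hs
  have hG1 : deriv (GamXY x y) s = ![0, deriv x s, -(deriv x s), 0, deriv y s] := by
    rw [deriv_Gam x y hx hy]
  have hG2 : deriv (deriv (GamXY x y)) s
      = ![0, deriv (deriv x) s, -(deriv (deriv x) s), 0, deriv (deriv y) s] := by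
    rw [deriv2_Gam x y hx hy]
  -- positivity of υ²
  have hpos : (deriv x s) ^ 2 + (deriv y s) ^ 2 > 0 := by
    by_contra h
    push_neg at h
    have hx0 : deriv x s = 0 := by nlinarith [sq_nonneg (deriv x s), sq_nonneg (deriv y s)]
    have hy0 : deriv y s = 0 := by nlinarith [sq_nonneg (deriv x s), sq_nonneg (deriv y s)]
    rw [hx0, hy0] at hu
    norm_num at hu
  have hne : (deriv x s) ^ 2 + (deriv y s) ^ 2 ≠ 0 := ne_of_gt hpos
  refine ⟨?_, ?_, ?_, ?_, hpos, ?_, ?_, ?_, ?_⟩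
  · simp [ip, GamXY]
  · rw [hG1]; simp [ip]
  · rw [hG2]; simp [ip]
  · rw [hG1, hG2, LinearIndependent.pair_iff]
    intro p q hpq
    have e1 : p * deriv x s + q * deriv (deriv x) s = 0 := by
      have := congrFun hpq 1
      simpa using this
    have e2 : p * deriv y s + q * deriv (deriv y) s = 0 := by
      have := congrFun hpq 4
      simpa using this
    constructor
    · linear_combination (deriv (deriv y) s) * e1 - (deriv (deriv x) s) * e2 - p * hu
    · linear_combination (deriv x s) * e2 - (deriv y s) * e1 - q * hu
  · simp only [ip, RXY]
    simp only [Matrix.cons_val_zero, Matrix.cons_val_one, Matrix.head_cons,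
      Matrix.cons_val_two, Matrix.tail_cons, Matrix.cons_val_three, Matrix.cons_val_four]
    field_simp
    ring
  · simp only [ip, RXY, GamXY]
    simp only [Matrix.cons_val_zero, Matrix.cons_val_one, Matrix.head_cons,
      Matrix.cons_val_two, Matrix.tail_cons, Matrix.cons_val_three, Matrix.cons_val_four]
    ring
  · rw [hG1]
    simp only [ip, RXY]
    simp only [Matrix.cons_val_zero, Matrix.cons_val_one, Matrix.head_cons,
      Matrix.cons_val_two, Matrix.tail_cons, Matrix.cons_val_three, Matrix.cons_val_four]
    ring
  · rw [hG2]
    simp only [ip, RXY]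
    simp only [Matrix.cons_val_zero, Matrix.cons_val_one, Matrix.head_cons,
      Matrix.cons_val_two, Matrix.tail_cons, Matrix.cons_val_three, Matrix.cons_val_four]
    linear_combination hu
end

section
/- (Existence of the left and right isotropic normal fields.) Let Γ : I → ℝ^{2,3} be a generic null curve of sign η ∈ {1,−1} on an open interval I. Then: (i) there exists a smooth map C : I → ℝ^{2,3} with ⟨C,C⟩ = 0, ⟨C,Γ⟩ = ⟨C,Γ′⟩ = ⟨C,Γ‴⟩ = 0 and ⟨C,Γ″⟩ = 1 identically on I; (ii) for any such C, the map D := −Γ″ − ηC satisfies ⟨D,D⟩ = 0, ⟨D,Γ⟩ = ⟨D,Γ′⟩ = ⟨D,Γ‴⟩ = 0, ⟨D,Γ″⟩ = η, ⟨C,D⟩ = −1, and Γ″ = −(ηC + D). -/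
/-- Cross product of four vectors in `ℝ^{2,3}`: `⟨Ec w₁ w₂ w₃ w₄, X⟩ = det(w₁,w₂,w₃,w₄,X)`. -/
noncomputable def Ec (w1 w2 w3 w4 : Fin 5 → ℝ) : Fin 5 → ℝ :=
  fun i => match i with
  | 0 => -w1 0 * w2 1 * w3 2 * w4 3 + w1 0 * w2 1 * w3 3 * w4 2 + w1 0 * w2 2 * w3 1 * w4 3 - w1 0 * w2 2 * w3 3 * w4 1 - w1 0 * w2 3 * w3 1 * w4 2 + w1 0 * w2 3 * w3 2 * w4 1 + w1 1 * w2 0 * w3 2 * w4 3 - w1 1 * w2 0 * w3 3 * w4 2 - w1 1 * w2 2 * w3 0 * w4 3 + w1 1 * w2 2 * w3 3 * w4 0 + w1 1 * w2 3 * w3 0 * w4 2 - w1 1 * w2 3 * w3 2 * w4 0 - w1 2 * w2 0 * w3 1 * w4 3 + w1 2 * w2 0 * w3 3 * w4 1 + w1 2 * w2 1 * w3 0 * w4 3 - w1 2 * w2 1 * w3 3 * w4 0 - w1 2 * w2 3 * w3 0 * w4 1 + w1 2 * w2 3 * w3 1 * w4 0 + w1 3 * w2 0 * w3 1 * w4 2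 - w1 3 * w2 0 * w3 2 * w4 1 - w1 3 * w2 1 * w3 0 * w4 2 + w1 3 * w2 1 * w3 2 * w4 0 + w1 3 * w2 2 * w3 0 * w4 1 - w1 3 * w2 2 * w3 1 * w4 0
  | 1 => w1 0 * w2 2 * w3 3 * w4 4 - w1 0 * w2 2 * w3 4 * w4 3 - w1 0 * w2 3 * w3 2 * w4 4 + w1 0 * w2 3 * w3 4 * w4 2 + w1 0 * w2 4 * w3 2 * w4 3 - w1 0 * w2 4 * w3 3 * w4 2 - w1 2 * w2 0 * w3 3 * w4 4 + w1 2 * w2 0 * w3 4 * w4 3 + w1 2 * w2 3 * w3 0 * w4 4 - w1 2 * w2 3 * w3 4 * w4 0 - w1 2 * w2 4 * w3 0 * w4 3 + w1 2 * w2 4 * w3 3 * w4 0 + w1 3 * w2 0 * w3 2 * w4 4 - w1 3 * w2 0 * w3 4 * w4 2 - w1 3 * w2 2 * w3 0 * w4 4 + w1 3 * w2 2 * w3 4 * w4 0 + w1 3 * w2 4 * w3 0 * w4 2 - w1 3 * w2 4 * w3 2 * w4 0 - w1 4 * w2 0 * w3 2 * w4 3 + w1 4 * w2 0 * w3 3 *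 w4 2 + w1 4 * w2 2 * w3 0 * w4 3 - w1 4 * w2 2 * w3 3 * w4 0 - w1 4 * w2 3 * w3 0 * w4 2 + w1 4 * w2 3 * w3 2 * w4 0
  | 2 => w1 0 * w2 1 * w3 3 * w4 4 - w1 0 * w2 1 * w3 4 * w4 3 - w1 0 * w2 3 * w3 1 * w4 4 + w1 0 * w2 3 * w3 4 * w4 1 + w1 0 * w2 4 * w3 1 * w4 3 - w1 0 * w2 4 * w3 3 * w4 1 - w1 1 * w2 0 * w3 3 * w4 4 + w1 1 * w2 0 * w3 4 * w4 3 + w1 1 * w2 3 * w3 0 * w4 4 - w1 1 * w2 3 * w3 4 * w4 0 - w1 1 * w2 4 * w3 0 * w4 3 + w1 1 * w2 4 * w3 3 * w4 0 + w1 3 * w2 0 * w3 1 * w4 4 - w1 3 * w2 0 * w3 4 * w4 1 - w1 3 * w2 1 * w3 0 * w4 4 + w1 3 * w2 1 * w3 4 * w4 0 + w1 3 * w2 4 * w3 0 * w4 1 - w1 3 * w2 4 * w3 1 * w4 0 - w1 4 * w2 0 * w3 1 * w4 3 + w1 4 * w2 0 * w3 3 * w4 1 + w1 4 * w2 1 *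 w3 0 * w4 3 - w1 4 * w2 1 * w3 3 * w4 0 - w1 4 * w2 3 * w3 0 * w4 1 + w1 4 * w2 3 * w3 1 * w4 0
  | 3 => -w1 0 * w2 1 * w3 2 * w4 4 + w1 0 * w2 1 * w3 4 * w4 2 + w1 0 * w2 2 * w3 1 * w4 4 - w1 0 * w2 2 * w3 4 * w4 1 - w1 0 * w2 4 * w3 1 * w4 2 + w1 0 * w2 4 * w3 2 * w4 1 + w1 1 * w2 0 * w3 2 * w4 4 - w1 1 * w2 0 * w3 4 * w4 2 - w1 1 * w2 2 * w3 0 * w4 4 + w1 1 * w2 2 * w3 4 * w4 0 + w1 1 * w2 4 * w3 0 * w4 2 - w1 1 * w2 4 * w3 2 * w4 0 - w1 2 * w2 0 * w3 1 * w4 4 + w1 2 * w2 0 * w3 4 * w4 1 + w1 2 * w2 1 * w3 0 * w4 4 - w1 2 * w2 1 * w3 4 * w4 0 - w1 2 * w2 4 * w3 0 * w4 1 + w1 2 * w2 4 * w3 1 * w4 0 + w1 4 * w2 0 * w3 1 * w4 2 - w1 4 * w2 0 * w3 2 * w4 1 - w1 4 * w2 1 * w3 0 * w4 2 + w1 4 *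 w2 1 * w3 2 * w4 0 + w1 4 * w2 2 * w3 0 * w4 1 - w1 4 * w2 2 * w3 1 * w4 0
  | 4 => -w1 1 * w2 2 * w3 3 * w4 4 + w1 1 * w2 2 * w3 4 * w4 3 + w1 1 * w2 3 * w3 2 * w4 4 - w1 1 * w2 3 * w3 4 * w4 2 - w1 1 * w2 4 * w3 2 * w4 3 + w1 1 * w2 4 * w3 3 * w4 2 + w1 2 * w2 1 * w3 3 * w4 4 - w1 2 * w2 1 * w3 4 * w4 3 - w1 2 * w2 3 * w3 1 * w4 4 + w1 2 * w2 3 * w3 4 * w4 1 + w1 2 * w2 4 * w3 1 * w4 3 - w1 2 * w2 4 * w3 3 * w4 1 - w1 3 * w2 1 * w3 2 * w4 4 + w1 3 * w2 1 * w3 4 * w4 2 + w1 3 * w2 2 * w3 1 * w4 4 - w1 3 * w2 2 * w3 4 * w4 1 - w1 3 * w2 4 * w3 1 * w4 2 + w1 3 * w2 4 * w3 2 * w4 1 + w1 4 * w2 1 * w3 2 * w4 3 - w1 4 * w2 1 * w3 3 * w4 2 - w1 4 * w2 2 * w3 1 * w4 3 + w1 4 * w2 2 * w3 3 * w4 1 +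 w1 4 * w2 3 * w3 1 * w4 2 - w1 4 * w2 3 * w3 2 * w4 1

lemma ip_Ec_self (w1 w2 w3 w4 : Fin 5 → ℝ) :
    ip (Ec w1 w2 w3 w4) (Ec w1 w2 w3 w4) =
      ip w1 w1 * ip w2 w2 * ip w3 w3 * ip w4 w4 - ip w1 w1 * ip w2 w2 * ip w3 w4 * ip w4 w3 - ip w1 w1 * ip w2 w3 * ip w3 w2 * ip w4 w4 + ip w1 w1 * ip w2 w3 * ip w3 w4 * ip w4 w2 + ip w1 w1 * ip w2 w4 * ip w3 w2 * ip w4 w3 - ip w1 w1 * ip w2 w4 * ip w3 w3 * ip w4 w2 - ip w1 w2 * ip w2 w1 * ip w3 w3 * ip w4 w4 + ip w1 w2 * ip w2 w1 * ip w3 w4 * ip w4 w3 + ip w1 w2 * ip w2 w3 * ip w3 w1 * ip w4 w4 - ip w1 w2 * ip w2 w3 * ip w3 w4 * ip w4 w1 - ip w1 w2 * ip w2 w4 * ip w3 w1 * ip w4 w3 + ip w1 w2 * ip w2 w4 * ip w3 w3 * ip w4 w1 + ip w1 w3 * ip w2 w1 * ip w3 w2 * ip w4 w4 - ip w1 w3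 * ip w2 w1 * ip w3 w4 * ip w4 w2 - ip w1 w3 * ip w2 w2 * ip w3 w1 * ip w4 w4 + ip w1 w3 * ip w2 w2 * ip w3 w4 * ip w4 w1 + ip w1 w3 * ip w2 w4 * ip w3 w1 * ip w4 w2 - ip w1 w3 * ip w2 w4 * ip w3 w2 * ip w4 w1 - ip w1 w4 * ip w2 w1 * ip w3 w2 * ip w4 w3 + ip w1 w4 * ip w2 w1 * ip w3 w3 * ip w4 w2 + ip w1 w4 * ip w2 w2 * ip w3 w1 * ip w4 w3 - ip w1 w4 * ip w2 w2 * ip w3 w3 * ip w4 w1 - ip w1 w4 * ip w2 w3 * ip w3 w1 * ip w4 w2 + ip w1 w4 * ip w2 w3 * ip w3 w2 * ip w4 w1 := by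
  simp only [ip, Ec]
  ring

lemma ip_Ec_w1 (w1 w2 w3 w4 : Fin 5 → ℝ) : ip (Ec w1 w2 w3 w4) w1 = 0 := by
  simp only [ip, Ec]; ring

lemma ip_Ec_w2 (w1 w2 w3 w4 : Fin 5 → ℝ) : ip (Ec w1 w2 w3 w4) w2 = 0 := by
  simp only [ip, Ec]; ring

lemma ip_Ec_w3 (w1 w2 w3 w4 : Fin 5 → ℝ) : ip (Ec w1 w2 w3 w4) w3 = 0 := by
  simp only [ip, Ec]; ring

lemma ip_Ec_w4 (w1 w2 w3 w4 : Fin 5 → ℝ) : ip (Ec w1 w2 w3 w4) w4 = 0 := by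
  simp only [ip, Ec]; ring

lemma ip_symm (X Y : Fin 5 → ℝ) : ip X Y = ip Y X := by simp only [ip]; ring

/-- Derivative of the scalar product of two differentiable curves. -/
lemma hasDerivAt_ip_s8 (u v : ℝ → Fin 5 → ℝ) (τ : ℝ)
    (hu : DifferentiableAt ℝ u τ) (hv : DifferentiableAt ℝ v τ) :
    HasDerivAt (fun t => ip (u t) (v t))
      (ip (deriv u τ) (v τ) + ip (u τ) (deriv v τ)) τ := by
  have hu' := hasDerivAt_pi.1 hu.hasDerivAt
  have hv' := hasDerivAt_pi.1 hv.hasDerivAt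
  have H : HasDerivAt (fun t => -(u t 0 * v t 4 + u t 4 * v t 0) - u t 1 * v t 1
      + u t 2 * v t 2 + u t 3 * v t 3)
      (-((deriv u τ 0 * v τ 4 + u τ 0 * deriv v τ 4)
          + (deriv u τ 4 * v τ 0 + u τ 4 * deriv v τ 0))
        - (deriv u τ 1 * v τ 1 + u τ 1 * deriv v τ 1)
        + (deriv u τ 2 * v τ 2 + u τ 2 * deriv v τ 2)
        + (deriv u τ 3 * v τ 3 + u τ 3 * deriv v τ 3)) τ := by
    exact ((((((hu' 0).mul (hv' 4)).add ((hu' 4).mul (hv' 0))).neg.sub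
      ((hu' 1).mul (hv' 1))).add ((hu' 2).mul (hv' 2))).add ((hu' 3).mul (hv' 3)))
  convert H using 1
  · rfl
  simp only [ip]
  ring

/-- If the scalar product of two smooth curves is constant on an open interval then the
"product rule" expression vanishes there. -/
lemma ip_deriv_zero (a b : ℝ) (u v : ℝ → Fin 5 → ℝ)
    (hu : Differentiable ℝ u) (hv : Differentiable ℝ v) (c : ℝ)
    (h : ∀ τ ∈ Set.Ioo a b, ip (u τ) (v τ) = c) :
    ∀ τ ∈ Set.Ioo a b, ip (deriv u τ) (v τ) + ip (u τ) (deriv v τ) = 0 := by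
  intro τ hτ
  have hD := hasDerivAt_ip_s8 u v τ (hu τ) (hv τ)
  have he : (fun t => ip (u t) (v t)) =ᶠ[nhds τ] (fun _ => c) :=
    Filter.eventuallyEq_of_mem (isOpen_Ioo.mem_nhds hτ) h
  have : deriv (fun t => ip (u t) (v t)) τ = deriv (fun _ : ℝ => c) τ := he.deriv_eq
  rw [hD.deriv, deriv_const] at this
  exact this

lemma contDiff_deriv' {f : ℝ → Fin 5 → ℝ} (hf : ContDiff ℝ (⊤ : ℕ∞) f) :
    ContDiff ℝ (⊤ : ℕ∞) (deriv f) :=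
  (contDiff_infty_iff_deriv.1 hf).2

/-- existence of the left and right isotropic normal fields: for a
generic null curve `Γ` of sign `η`: (i) there is a smooth `C` with `⟨C,C⟩ = 0`,
`⟨C,Γ⟩ = ⟨C,Γ′⟩ = ⟨C,Γ‴⟩ = 0` and `⟨C,Γ″⟩ = 1` on `I`; (ii) for any such `C`, the
field `D := −Γ″ − ηC` satisfies `⟨D,D⟩ = 0`, `⟨D,Γ⟩ = ⟨D,Γ′⟩ = ⟨D,Γ‴⟩ = 0`,
`⟨D,Γ″⟩ = η`, `⟨C,D⟩ = −1` and `Γ″ = −(ηC + D)`. -/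
theorem stmt8 (a b : ℝ) (η : ℝ) (hη : η = 1 ∨ η = -1)
    (Γ : ℝ → Fin 5 → ℝ) (hΓ : ContDiff ℝ (⊤ : ℕ∞) Γ)
    (h1 : ∀ τ ∈ Set.Ioo a b, ip (Γ τ) (Γ τ) = 1)
    (h2 : ∀ τ ∈ Set.Ioo a b, ip (deriv Γ τ) (deriv Γ τ) = 0)
    (h3 : ∀ τ ∈ Set.Ioo a b, ip (deriv (deriv Γ) τ) (deriv (deriv Γ) τ) = -2 * η) :
    -- (i) existence of a smooth isotropic normal field `C`
    (∃ C : ℝ → Fin 5 → ℝ, ContDiffOn ℝ (⊤ : ℕ∞) C (Set.Ioo a b) ∧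
      ∀ τ ∈ Set.Ioo a b,
        ip (C τ) (C τ) = 0 ∧
        ip (C τ) (Γ τ) = 0 ∧
        ip (C τ) (deriv Γ τ) = 0 ∧
        ip (C τ) (deriv (deriv (deriv Γ)) τ) = 0 ∧
        ip (C τ) (deriv (deriv Γ) τ) = 1) ∧
    -- (ii) the dual field `D = −Γ″ − ηC`
    (∀ C : ℝ → Fin 5 → ℝ,
      (∀ τ ∈ Set.Ioo a b,
        ip (C τ) (C τ) = 0 ∧
        ip (C τ) (Γ τ) = 0 ∧
        ip (C τ) (deriv Γ τ) = 0 ∧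
        ip (C τ) (deriv (deriv (deriv Γ)) τ) = 0 ∧
        ip (C τ) (deriv (deriv Γ) τ) = 1) →
      ∀ τ ∈ Set.Ioo a b, ∀ D : Fin 5 → ℝ,
        D = -(deriv (deriv Γ) τ) - η • C τ →
        ip D D = 0 ∧
        ip D (Γ τ) = 0 ∧
        ip D (deriv Γ τ) = 0 ∧
        ip D (deriv (deriv (deriv Γ)) τ) = 0 ∧
        ip D (deriv (deriv Γ) τ) = η ∧
        ip (C τ) D = -1 ∧
        deriv (deriv Γ) τ = -(η • C τ + D)) := by
  have hη2 : η * η = 1 := by rcases hη with h | h <;> subst h <;> norm_num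
  set Γ1 := deriv Γ with hΓ1
  set Γ2 := deriv Γ1 with hΓ2
  set Γ3 := deriv Γ2 with hΓ3
  have sΓ1 : ContDiff ℝ (⊤ : ℕ∞) Γ1 := contDiff_deriv' hΓ
  have sΓ2 : ContDiff ℝ (⊤ : ℕ∞) Γ2 := contDiff_deriv' sΓ1
  have sΓ3 : ContDiff ℝ (⊤ : ℕ∞) Γ3 := contDiff_deriv' sΓ2
  have dΓ : Differentiable ℝ Γ := hΓ.differentiable (by simp)
  have dΓ1 : Differentiable ℝ Γ1 := sΓ1.differentiable (by simp)
  have dΓ2 : Differentiable ℝ Γ2 := sΓ2.differentiable (by simp)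
  -- Gram relations on the interval
  have g01 : ∀ τ ∈ Set.Ioo a b, ip (Γ τ) (Γ1 τ) = 0 := by
    intro τ hτ
    have := ip_deriv_zero a b Γ Γ dΓ dΓ 1 h1 τ hτ
    simp only [← hΓ1] at this
    have hs := ip_symm (Γ1 τ) (Γ τ)
    linarith
  have g02 : ∀ τ ∈ Set.Ioo a b, ip (Γ τ) (Γ2 τ) = 0 := by
    intro τ hτ
    have := ip_deriv_zero a b Γ Γ1 dΓ dΓ1 0 g01 τ hτ
    simp only [← hΓ1, ← hΓ2] at this
    have h2' := h2 τ hτ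
    linarith
  have g12 : ∀ τ ∈ Set.Ioo a b, ip (Γ1 τ) (Γ2 τ) = 0 := by
    intro τ hτ
    have := ip_deriv_zero a b Γ1 Γ1 dΓ1 dΓ1 0 h2 τ hτ
    simp only [← hΓ2] at this
    have hs := ip_symm (Γ2 τ) (Γ1 τ)
    linarith
  have g03 : ∀ τ ∈ Set.Ioo a b, ip (Γ τ) (Γ3 τ) = 0 := by
    intro τ hτ
    have := ip_deriv_zero a b Γ Γ2 dΓ dΓ2 0 g02 τ hτ
    simp only [← hΓ1, ← hΓ3] at this
    have h12 := g12 τ hτ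
    have hs := ip_symm (Γ1 τ) (Γ2 τ)
    linarith
  have g13 : ∀ τ ∈ Set.Ioo a b, ip (Γ1 τ) (Γ3 τ) = 2 * η := by
    intro τ hτ
    have := ip_deriv_zero a b Γ1 Γ2 dΓ1 dΓ2 0 g12 τ hτ
    simp only [← hΓ2, ← hΓ3] at this
    have h22 := h3 τ hτ
    linarith
  have g23 : ∀ τ ∈ Set.Ioo a b, ip (Γ2 τ) (Γ3 τ) = 0 := by
    intro τ hτ
    have := ip_deriv_zero a b Γ2 Γ2 dΓ2 dΓ2 (-2 * η) h3 τ hτ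
    simp only [← hΓ3] at this
    have hs := ip_symm (Γ3 τ) (Γ2 τ)
    linarith
  have g22 : ∀ τ ∈ Set.Ioo a b, ip (Γ2 τ) (Γ2 τ) = -2 * η := h3
  have g11 : ∀ τ ∈ Set.Ioo a b, ip (Γ1 τ) (Γ1 τ) = 0 := h2
  -- the candidate field
  set E : ℝ → Fin 5 → ℝ := fun τ => Ec (Γ τ) (Γ1 τ) (Γ2 τ) (Γ3 τ) with hE
  set C : ℝ → Fin 5 → ℝ := fun τ => fun i => -(η / 2) * Γ2 τ i + (η / 4) * E τ i with hC
  have ipC : ∀ τ, ∀ Z : Fin 5 → ℝ,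
      ip (C τ) Z = -(η / 2) * ip (Γ2 τ) Z + (η / 4) * ip (E τ) Z := by
    intro τ Z; simp only [hC, ip]; ring
  have hEE : ∀ τ ∈ Set.Ioo a b, ip (E τ) (E τ) = 8 * η := by
    intro τ hτ
    have e00 := h1 τ hτ
    have e01 := g01 τ hτ; have e10 := (ip_symm (Γ1 τ) (Γ τ)).trans e01
    have e02 := g02 τ hτ; have e20 := (ip_symm (Γ2 τ) (Γ τ)).trans e02
    have e03 := g03 τ hτ; have e30 := (ip_symm (Γ3 τ) (Γ τ)).trans e03
    have e11 := g11 τ hτ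
    have e12 := g12 τ hτ; have e21 := (ip_symm (Γ2 τ) (Γ1 τ)).trans e12
    have e13 := g13 τ hτ; have e31 := (ip_symm (Γ3 τ) (Γ1 τ)).trans e13
    have e22 := g22 τ hτ
    have e23 := g23 τ hτ; have e32 := (ip_symm (Γ3 τ) (Γ2 τ)).trans e23
    rw [hE, ip_Ec_self, e00, e01, e10, e02, e20, e03, e30, e11, e12, e21, e13, e31,
      e22, e23, e32]
    rcases hη with h | h <;> subst h <;> ring
  refine ⟨⟨C, ?_, ?_⟩, ?_⟩
  · -- smoothness of C
    apply ContDiff.contDiffOn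
    rw [contDiff_pi]
    intro i
    have hcomp : ∀ (j : Fin 5), ContDiff ℝ (⊤ : ℕ∞) (fun τ => Γ τ j) ∧
        ContDiff ℝ (⊤ : ℕ∞) (fun τ => Γ1 τ j) ∧ ContDiff ℝ (⊤ : ℕ∞) (fun τ => Γ2 τ j) ∧
        ContDiff ℝ (⊤ : ℕ∞) (fun τ => Γ3 τ j) :=
      fun j => ⟨contDiff_pi.1 hΓ j, contDiff_pi.1 sΓ1 j, contDiff_pi.1 sΓ2 j,
        contDiff_pi.1 sΓ3 j⟩
    have hE' : ContDiff ℝ (⊤ : ℕ∞) (fun τ => E τ i) := by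
      have h0 := fun j => (hcomp j).1
      have h1' := fun j => (hcomp j).2.1
      have h2' := fun j => (hcomp j).2.2.1
      have h3' := fun j => (hcomp j).2.2.2
      simp only [hE]
      fin_cases i <;> · simp only [Ec]; fun_prop
    have h2i : ContDiff ℝ (⊤ : ℕ∞) (fun τ => Γ2 τ i) := contDiff_pi.1 sΓ2 i
    simp only [hC]
    fun_prop
  · -- properties of C
    intro τ hτ
    have hCg0 : ip (C τ) (Γ τ) = 0 := by
      rw [ipC, ip_symm (Γ2 τ), g02 τ hτ, hE, ip_Ec_w1]; ring
    have hCg1 : ip (C τ) (Γ1 τ) = 0 := by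
      rw [ipC, ip_symm (Γ2 τ), g12 τ hτ, hE, ip_Ec_w2]; ring
    have hCg2 : ip (C τ) (Γ2 τ) = 1 := by
      rw [ipC, g22 τ hτ, hE, ip_Ec_w3]
      nlinarith [hη2]
    have hCg3 : ip (C τ) (Γ3 τ) = 0 := by
      rw [ipC, g23 τ hτ, hE, ip_Ec_w4]; ring
    have hCC : ip (C τ) (C τ) = 0 := by
      have expand : ip (C τ) (C τ) = (η / 2) * (η / 2) * ip (Γ2 τ) (Γ2 τ)
          - 2 * (η / 2) * (η / 4) * ip (E τ) (Γ2 τ)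
          + (η / 4) * (η / 4) * ip (E τ) (E τ) := by
        simp only [hC, ip]; ring
      rw [expand, g22 τ hτ, hEE τ hτ, hE, ip_Ec_w3]
      nlinarith [hη2]
    exact ⟨hCC, hCg0, hCg1, hCg3, hCg2⟩
  · -- part (ii)
    intro C' hC' τ hτ D hD
    obtain ⟨c0, c1, c2, c3, c4⟩ := hC' τ hτ
    have ipD : ∀ Z : Fin 5 → ℝ, ip D Z = -ip (Γ2 τ) Z - η * ip (C' τ) Z := by
      intro Z
      subst hD
      simp only [ip, Pi.sub_apply, Pi.neg_apply, Pi.smul_apply, smul_eq_mul]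
      ring
    have ipD' : ∀ Z : Fin 5 → ℝ, ip Z D = -ip (Γ2 τ) Z - η * ip (C' τ) Z := by
      intro Z; rw [ip_symm]; exact ipD Z
    have hDg0 : ip D (Γ τ) = 0 := by
      rw [ipD, ip_symm (Γ2 τ), g02 τ hτ, c1]; ring
    have hDg1 : ip D (Γ1 τ) = 0 := by
      rw [ipD, ip_symm (Γ2 τ), g12 τ hτ, c2]; ring
    have hDg2 : ip D (Γ2 τ) = η := by
      rw [ipD, g22 τ hτ, ip_symm (C' τ) (Γ2 τ)] at *
      rw [c4]; ring
    have hDg3 : ip D (Γ3 τ) = 0 := by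
      rw [ipD, g23 τ hτ, c3]; ring
    have hCD : ip (C' τ) D = -1 := by
      rw [ipD', ip_symm (Γ2 τ), c4, c0]; ring
    have hDD : ip D D = 0 := by
      rw [ipD']
      have h1' : ip (Γ2 τ) D = η := by rw [ip_symm]; exact hDg2
      rw [h1', hCD]; nlinarith [hη2]
    refine ⟨hDD, hDg0, hDg1, hDg3, hDg2, hCD, ?_⟩
    subst hD
    funext i
    simp only [Pi.neg_apply, Pi.add_apply, Pi.sub_apply, Pi.smul_apply, smul_eq_mul]
    ring
end

section
/- (Affine reduction of a biisotropic curve.) Let Γ : I → ℝ^{2,3} be a biisotropic curve on an open interval I, and let (C₀,…,C₄) be a basis of ℝ⁵ whose Gram matrix with respect to ⟨·,·⟩ is ⟨C₀,C₄⟩ = ⟨C₄,C₀⟩ = −1, ⟨C₁,C₁⟩ = −1, ⟨C₂,C₂⟩ = ⟨C₃,C₃⟩ = 1, with all other pairings ⟨C_i,C_j⟩ = 0. Assume span{Γ′(τ), Γ″(τ)} = span{C₄, C₁ − C₂} and span{Γ(τ), Γ′(τ), Γ″(τ)} = span{C₃, C₄, C₁ − C₂} for every τ ∈ I. Then there exist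 smooth functions x, y : I → ℝ and a constant ε ∈ {1,−1} such that Γ = εC₃ + x(C₁ − C₂) + yC₄ on I, and x′y″ − x″y′ is nowhere zero on I. -/
/-- The Gram matrix of a calibrated lightcone basis:
`⟨C₀,C₄⟩ = ⟨C₄,C₀⟩ = −1`, `⟨C₁,C₁⟩ = −1`, `⟨C₂,C₂⟩ = ⟨C₃,C₃⟩ = 1`, all others `0`. -/
noncomputable def lightconeGram : Matrix (Fin 5) (Fin 5) ℝ :=
  !![0, 0, 0, 0, -1;
     0, -1, 0, 0, 0;
     0, 0, 1, 0, 0;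
     0, 0, 0, 1, 0;
     -1, 0, 0, 0, 0]

private lemma hasDerivAt_clm_comp (L : (Fin 5 → ℝ) →L[ℝ] ℝ) {f : ℝ → Fin 5 → ℝ}
    {f' : Fin 5 → ℝ} {x : ℝ} (hf : HasDerivAt f f' x) :
    HasDerivAt (fun t => L (f t)) (L f') x := by
  exact L.hasFDerivAt.comp_hasDerivAt x hf

private lemma combo_repr (C : Module.Basis (Fin 5) ℝ (Fin 5 → ℝ)) {v : Fin 5 → ℝ} {p q r : ℝ}
    (h : v = p • C 3 + q • C 4 + r • (C 1 - C 2)) :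
    C.repr v 3 = p ∧ C.repr v 4 = q ∧ C.repr v 1 = r := by
  subst h; simp [Module.Basis.repr_self, Finsupp.single_apply]

private lemma ip_quad (c1 c2 c3 c4 : Fin 5 → ℝ) (p r q : ℝ) :
    ip (p • c3 + r • (c1 - c2) + q • c4) (p • c3 + r • (c1 - c2) + q • c4)
      = p^2 * ip c3 c3 + r^2 * (ip c1 c1 - ip c1 c2 - ip c2 c1 + ip c2 c2) + q^2 * ip c4 c4
        + p*r*(ip c3 c1 - ip c3 c2 + ip c1 c3 - ip c2 c3)
        + p*q*(ip c3 c4 + ip c4 c3)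
        + r*q*(ip c1 c4 - ip c2 c4 + ip c4 c1 - ip c4 c2) := by
  simp only [ip, Pi.add_apply, Pi.smul_apply, Pi.sub_apply, smul_eq_mul]; ring

/-- affine reduction of a biisotropic curve: if `Γ` is biisotropic and
`(C₀,…,C₄)` is a lightcone basis with `span{Γ′,Γ″} = span{C₄, C₁−C₂}` and
`span{Γ,Γ′,Γ″} = span{C₃, C₄, C₁−C₂}`, then `Γ = εC₃ + x(C₁−C₂) + yC₄` for smooth
functions `x, y` and a constant `ε = ±1`, with `x′y″ − x″y′` nowhere zero. -/
theorem stmt11 (a b : ℝ) (Γ : ℝ → Fin 5 → ℝ)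
    (hΓ : ContDiff ℝ (⊤ : ℕ∞) Γ)
    -- `Γ` is biisotropic
    (h1 : ∀ τ ∈ Set.Ioo a b, ip (Γ τ) (Γ τ) = 1)
    (h2 : ∀ τ ∈ Set.Ioo a b, ip (deriv Γ τ) (deriv Γ τ) = 0)
    (h3 : ∀ τ ∈ Set.Ioo a b, ip (deriv (deriv Γ) τ) (deriv (deriv Γ) τ) = 0)
    (h4 : ∀ τ ∈ Set.Ioo a b, LinearIndependent ℝ ![deriv Γ τ, deriv (deriv Γ) τ])
    -- `(C₀,…,C₄)` is a basis with the lightcone Gram matrix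
    (C : Module.Basis (Fin 5) ℝ (Fin 5 → ℝ))
    (hgram : ∀ i j : Fin 5, ip (C i) (C j) = lightconeGram i j)
    -- calibration: the span conditions
    (hV : ∀ τ ∈ Set.Ioo a b,
      Submodule.span ℝ ({deriv Γ τ, deriv (deriv Γ) τ} : Set (Fin 5 → ℝ)) =
        Submodule.span ℝ ({C 4, C 1 - C 2} : Set (Fin 5 → ℝ)))
    (hW : ∀ τ ∈ Set.Ioo a b,
      Submodule.span ℝ ({Γ τ, deriv Γ τ, deriv (deriv Γ) τ} : Set (Fin 5 → ℝ)) =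
        Submodule.span ℝ ({C 3, C 4, C 1 - C 2} : Set (Fin 5 → ℝ))) :
    ∃ x y : ℝ → ℝ, ContDiffOn ℝ (⊤ : ℕ∞) x (Set.Ioo a b) ∧ ContDiffOn ℝ (⊤ : ℕ∞) y (Set.Ioo a b) ∧
      ∃ ε : ℝ, (ε = 1 ∨ ε = -1) ∧
        ∀ τ ∈ Set.Ioo a b,
          Γ τ = ε • C 3 + x τ • (C 1 - C 2) + y τ • C 4 ∧
          deriv x τ * deriv (deriv y) τ - deriv (deriv x) τ * deriv y τ ≠ 0 := by
  by_cases hne : (Set.Ioo a b).Nonempty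
  swap
  · refine ⟨0, 0, contDiffOn_const, contDiffOn_const, 1, Or.inl rfl, fun τ hτ => ?_⟩
    exact absurd ⟨τ, hτ⟩ hne
  obtain ⟨τ₀, hτ₀⟩ := hne
  -- coordinate functions
  set L : Fin 5 → ((Fin 5 → ℝ) →L[ℝ] ℝ) :=
    fun i => LinearMap.toContinuousLinearMap (C.coord i) with hLdef
  have hL : ∀ i (v : Fin 5 → ℝ), L i v = C.repr v i := by
    intro i v; simp [hLdef, Module.Basis.coord_apply]
  set x : ℝ → ℝ := fun τ => L 1 (Γ τ) with hxdef
  set y : ℝ → ℝ := fun τ => L 4 (Γ τ) with hydef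
  set e : ℝ → ℝ := fun τ => L 3 (Γ τ) with hedef
  have hΓd : Differentiable ℝ Γ := hΓ.differentiable (by simp)
  have hGinf : ContDiff ℝ (⊤ : ℕ∞) Γ := hΓ.of_le (by simp)
  have hΓ' : ContDiff ℝ (⊤ : ℕ∞) (deriv Γ) := (contDiff_infty_iff_deriv.mp hGinf).2
  have hΓ'd : Differentiable ℝ (deriv Γ) := hΓ'.differentiable (by simp)
  -- first derivatives of coordinate functions
  have hd1 : ∀ i, deriv (fun τ => L i (Γ τ)) = fun τ => L i (deriv Γ τ) := by
    intro i; funext τ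
    exact (hasDerivAt_clm_comp (L i) (hΓd τ).hasDerivAt).deriv
  have hd2 : ∀ i τ, deriv (deriv (fun τ => L i (Γ τ))) τ = L i (deriv (deriv Γ) τ) := by
    intro i τ; rw [hd1 i]
    exact (hasDerivAt_clm_comp (L i) (hΓ'd τ).hasDerivAt).deriv
  simp only [hL] at hd1 hd2
  -- decomposition of Γ
  have G : ∀ τ ∈ Set.Ioo a b,
      Γ τ = e τ • C 3 + x τ • (C 1 - C 2) + y τ • C 4 := by
    intro τ hτ
    have hWmem : Γ τ ∈ Submodule.span ℝ ({C 3, C 4, C 1 - C 2} : Set (Fin 5 → ℝ)) := by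
      rw [← hW τ hτ]; exact Submodule.subset_span (by simp)
    obtain ⟨p, z, hz, hv⟩ := Submodule.mem_span_insert.mp hWmem
    obtain ⟨q, r, hqr⟩ := Submodule.mem_span_pair.mp hz
    have hdec : Γ τ = p • C 3 + q • C 4 + r • (C 1 - C 2) := by
      rw [hv, ← hqr]; module
    obtain ⟨hp, hq, hr⟩ := combo_repr C hdec
    have he : e τ = p := by simp only [hedef, hL]; exact hp
    have hx1 : x τ = r := by simp only [hxdef, hL]; exact hr
    have hy1 : y τ = q := by simp only [hydef, hL]; exact hq
    rw [hdec, he, hx1, hy1]; module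
  -- decomposition of derivatives
  have D : ∀ v ∈ Submodule.span ℝ ({C 4, C 1 - C 2} : Set (Fin 5 → ℝ)),
      v = C.repr v 1 • (C 1 - C 2) + C.repr v 4 • C 4 ∧ C.repr v 3 = 0 := by
    intro v hv
    obtain ⟨q, r, hqr⟩ := Submodule.mem_span_pair.mp hv
    have hdec : v = (0:ℝ) • C 3 + q • C 4 + r • (C 1 - C 2) := by
      rw [← hqr]; module
    obtain ⟨hp, hq, hr⟩ := combo_repr C hdec
    constructor
    · rw [hr, hq, hdec]; module
    · exact hp
  have D1 : ∀ τ ∈ Set.Ioo a b,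
      deriv Γ τ = deriv x τ • (C 1 - C 2) + deriv y τ • C 4 ∧
        C.repr (deriv Γ τ) 3 = 0 := by
    intro τ hτ
    have hmem : deriv Γ τ ∈ Submodule.span ℝ ({C 4, C 1 - C 2} : Set (Fin 5 → ℝ)) := by
      rw [← hV τ hτ]; exact Submodule.subset_span (by simp)
    obtain ⟨hdv, h3v⟩ := D _ hmem
    refine ⟨?_, h3v⟩
    have hx' : deriv x τ = C.repr (deriv Γ τ) 1 := by
      simp only [hxdef, hL]; rw [hd1 1]
    have hy' : deriv y τ = C.repr (deriv Γ τ) 4 := by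
      simp only [hydef, hL]; rw [hd1 4]
    rw [hx', hy']; exact hdv
  have D2 : ∀ τ ∈ Set.Ioo a b,
      deriv (deriv Γ) τ = deriv (deriv x) τ • (C 1 - C 2) + deriv (deriv y) τ • C 4 := by
    intro τ hτ
    have hmem : deriv (deriv Γ) τ ∈
        Submodule.span ℝ ({C 4, C 1 - C 2} : Set (Fin 5 → ℝ)) := by
      rw [← hV τ hτ]; exact Submodule.subset_span (by simp)
    obtain ⟨hdv, _⟩ := D _ hmem
    have hx'' : deriv (deriv x) τ = C.repr (deriv (deriv Γ) τ) 1 := by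
      simp only [hxdef, hL]; exact hd2 1 τ
    have hy'' : deriv (deriv y) τ = C.repr (deriv (deriv Γ) τ) 4 := by
      simp only [hydef, hL]; exact hd2 4 τ
    rw [hx'', hy'']; exact hdv
  -- e has vanishing derivative on the interval
  have E0 : ∀ τ ∈ Set.Ioo a b, deriv e τ = 0 := by
    intro τ hτ
    have := (D1 τ hτ).2
    simp only [hedef, hL]; rw [hd1 3]; exact this
  -- e is constant on the interval
  have hec : ContDiff ℝ (⊤ : ℕ∞) e := (L 3).contDiff.comp hΓ
  have hede : Differentiable ℝ e := hec.differentiable (by simp)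
  have econst : ∀ τ ∈ Set.Ioo a b, e τ = e τ₀ := by
    intro τ hτ
    refine (convex_Ioo a b).is_const_of_fderivWithin_eq_zero
      hede.differentiableOn (fun z hz => ?_) hτ hτ₀
    rw [fderivWithin_of_isOpen isOpen_Ioo hz]
    have hz0 : HasDerivAt e 0 z := (E0 z hz) ▸ (hede z).hasDerivAt
    have hF := hasDerivAt_iff_hasFDerivAt.mp hz0
    rw [hF.fderiv]; ext; simp
  -- ε = ±1
  have hipτ0 := h1 τ₀ hτ₀
  rw [G τ₀ hτ₀, ip_quad] at hipτ0
  simp only [hgram] at hipτ0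
  norm_num [lightconeGram, Matrix.cons_val_two, Matrix.cons_val_three,
    Matrix.cons_val_four, Matrix.vecHead, Matrix.vecTail] at hipτ0
  have hεpm : e τ₀ = 1 ∨ e τ₀ = -1 := hipτ0
  -- assemble
  refine ⟨x, y, ((L 1).contDiff.comp hΓ).contDiffOn, ((L 4).contDiff.comp hΓ).contDiffOn,
    e τ₀, hεpm, fun τ hτ => ?_⟩
  constructor
  · rw [G τ hτ, econst τ hτ]
  · intro hdet
    have hpair := LinearIndependent.pair_iff.mp (h4 τ hτ)
    obtain ⟨hD1, _⟩ := D1 τ hτ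
    have hD2 := D2 τ hτ
    have hA : (deriv (deriv y) τ) • deriv Γ τ + (-(deriv y τ)) • deriv (deriv Γ) τ = 0 := by
      rw [hD1, hD2]
      match_scalars
      · linear_combination hdet
      · linear_combination -hdet
      · ring
    obtain ⟨hy''0, hy'0⟩ := hpair _ _ hA
    have hB : (deriv (deriv x) τ) • deriv Γ τ + (-(deriv x τ)) • deriv (deriv Γ) τ = 0 := by
      rw [hD1, hD2]
      match_scalars
      · ring
      · ring
      · linear_combination -hdet
    obtain ⟨hx''0, hx'0⟩ := hpair _ _ hB
    have hΓ'0 : deriv Γ τ = 0 := by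
      rw [hD1, show deriv x τ = 0 by linarith [neg_eq_zero.mp hx'0],
        show deriv y τ = 0 by linarith [neg_eq_zero.mp hy'0]]
      simp
    have := (h4 τ hτ).ne_zero 0
    simp only [Matrix.cons_val_zero] at this
    exact this hΓ'0
end

section
/- (Parametrization of null curves in S^{2,2}.) Equip ℝ⁵ = ℝ² × ℝ³ with the bilinear form ⟨(v,w),(ṽ,w̃)⟩ = −v·ṽ + w·w̃ of signature (2,3). Let I ⊆ ℝ be an open interval, α : I → ℝ² a smooth curve with |α′(s)| = 1 for all s, and β : I → ℝ³ a smooth curve with |β(s)| = 1 for all s. Define Γ : I → ℝ⁵ by Γ(s) = (α(s), √(1 + |α(s)|²) · β(s)). Then ⟨Γ,Γ⟩ ≡ 1, and Γ is a null curve (i.e. ⟨Γ′,Γ′⟩ ≡ 0) if and only if |β′(s)|² = (1 + |α(s)|² − (α(s)·α′(s))²)/(1 + |α(s)|²)² for every s ∈ I. -/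
/-- Euclidean dot product on `ℝ²`. -/
noncomputable def dot2 (v w : Fin 2 → ℝ) : ℝ := ∑ i, v i * w i

/-- Euclidean dot product on `ℝ³`. -/
noncomputable def dot3 (v w : Fin 3 → ℝ) : ℝ := ∑ i, v i * w i

/-- The signature `(2,3)` form on `ℝ⁵ = ℝ² × ℝ³`: `⟨(v,w),(ṽ,w̃)⟩ = −v·ṽ + w·w̃`. -/
noncomputable def ipProd (p q : (Fin 2 → ℝ) × (Fin 3 → ℝ)) : ℝ :=
  -dot2 p.1 q.1 + dot3 p.2 q.2

/-- The curve `Γ(s) = (α(s), √(1 + |α(s)|²)·β(s))` in `S^{2,2}`. -/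
noncomputable def GamAB (α : ℝ → Fin 2 → ℝ) (β : ℝ → Fin 3 → ℝ) (s : ℝ) :
    (Fin 2 → ℝ) × (Fin 3 → ℝ) :=
  (α s, Real.sqrt (1 + dot2 (α s) (α s)) • β s)

lemma dot2_nonneg (v : Fin 2 → ℝ) : 0 ≤ dot2 v v :=
  Finset.sum_nonneg fun _ _ => mul_self_nonneg _

lemma dot3_smul_smul (c d : ℝ) (v w : Fin 3 → ℝ) :
    dot3 (c • v) (d • w) = c * d * dot3 v w := by
  simp only [dot3, Pi.smul_apply, smul_eq_mul, Finset.mul_sum]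
  exact Finset.sum_congr rfl fun i _ => by ring

lemma dot3_add_self (x y : Fin 3 → ℝ) :
    dot3 (x + y) (x + y) = dot3 x x + 2 * dot3 x y + dot3 y y := by
  simp only [dot3, Pi.add_apply, Finset.mul_sum, ← Finset.sum_add_distrib]
  exact Finset.sum_congr rfl fun i _ => by ring

/-- parametrization of null curves in `S^{2,2}`: with `|α′| = 1` and
`|β| = 1` on an open interval, `Γ(s) = (α(s), √(1 + |α(s)|²)·β(s))` satisfies
`⟨Γ,Γ⟩ = 1`, and `⟨Γ′,Γ′⟩ = 0` holds at `s` iff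
`|β′(s)|² = (1 + |α(s)|² − (α(s)·α′(s))²)/(1 + |α(s)|²)²`. -/
theorem stmt16 (a b : ℝ)
    (α : ℝ → Fin 2 → ℝ) (β : ℝ → Fin 3 → ℝ)
    (hα : ContDiff ℝ (⊤ : ℕ∞) α) (hβ : ContDiff ℝ (⊤ : ℕ∞) β)
    (hα' : ∀ s ∈ Set.Ioo a b, dot2 (deriv α s) (deriv α s) = 1)
    (hβ1 : ∀ s ∈ Set.Ioo a b, dot3 (β s) (β s) = 1) :
    ∀ s ∈ Set.Ioo a b,
      ipProd (GamAB α β s) (GamAB α β s) = 1 ∧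
      (ipProd (deriv (GamAB α β) s) (deriv (GamAB α β) s) = 0 ↔
        dot3 (deriv β s) (deriv β s) =
          (1 + dot2 (α s) (α s) - (dot2 (α s) (deriv α s)) ^ 2) /
            (1 + dot2 (α s) (α s)) ^ 2) := by
  intro s hs
  set r : ℝ := 1 + dot2 (α s) (α s) with hrdef
  have hr : 0 < r := by have := dot2_nonneg (α s); simp only [hrdef]; linarith
  have hsq : Real.sqrt r * Real.sqrt r = r := Real.mul_self_sqrt hr.le
  have hsqpos : 0 < Real.sqrt r := Real.sqrt_pos.mpr hr
  -- derivatives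
  have hA : HasDerivAt α (deriv α s) s := (hα.differentiable (by simp) s).hasDerivAt
  have hB : HasDerivAt β (deriv β s) s := (hβ.differentiable (by simp) s).hasDerivAt
  have hAi : ∀ i, HasDerivAt (fun t => α t i) (deriv α s i) s := hasDerivAt_pi.mp hA
  have hBi : ∀ i, HasDerivAt (fun t => β t i) (deriv β s i) s := hasDerivAt_pi.mp hB
  set p : ℝ := dot2 (α s) (deriv α s) with hpdef
  have hq : HasDerivAt (fun t => dot2 (α t) (α t)) (2 * p) s := by
    have h : HasDerivAt (fun t => ∑ i, α t i * α t i)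
        (∑ i, (deriv α s i * α s i + α s i * deriv α s i)) s := HasDerivAt.fun_sum (u := Finset.univ)
      (fun i _ => ((hAi i).mul (hAi i)))
    convert h using 1
    rfl
    simp only [hpdef, dot2, Finset.mul_sum]
    exact Finset.sum_congr rfl fun i _ => by ring
  -- β·β' = 0
  have hbb : HasDerivAt (fun t => dot3 (β t) (β t)) (2 * dot3 (β s) (deriv β s)) s := by
    have h : HasDerivAt (fun t => ∑ i, β t i * β t i)
        (∑ i, (deriv β s i * β s i + β s i * deriv β s i)) s := HasDerivAt.fun_sum (u := Finset.univ)
      (fun i _ => ((hBi i).mul (hBi i)))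
    convert h using 1
    rfl
    simp only [dot3, Finset.mul_sum]
    exact Finset.sum_congr rfl fun i _ => by ring
  have hbb0 : dot3 (β s) (deriv β s) = 0 := by
    have hev : (fun t => dot3 (β t) (β t)) =ᶠ[nhds s] fun _ => (1 : ℝ) :=
      Filter.eventually_of_mem (isOpen_Ioo.mem_nhds hs) hβ1
    have h1 : deriv (fun t => dot3 (β t) (β t)) s = deriv (fun _ : ℝ => (1 : ℝ)) s :=
      hev.deriv_eq
    rw [hbb.deriv, deriv_const] at h1
    linarith
  -- derivative of Γ
  have hsr : HasDerivAt (fun t => Real.sqrt (1 + dot2 (α t) (α t)))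
      (1 / (2 * Real.sqrt r) * (2 * p)) s := by
    have h1 : HasDerivAt (fun t => 1 + dot2 (α t) (α t)) (2 * p) s := hq.const_add 1
    exact (Real.hasDerivAt_sqrt hr.ne').comp s h1
  have hc : (1 / (2 * Real.sqrt r) * (2 * p)) = p / Real.sqrt r := by
    field_simp
  have hD : HasDerivAt (fun t => Real.sqrt (1 + dot2 (α t) (α t)) • β t)
      (Real.sqrt r • deriv β s + (p / Real.sqrt r) • β s) s := by
    have h := hsr.smul hB
    rwa [hc] at h
  have hG : HasDerivAt (GamAB α β)
      (deriv α s, Real.sqrt r • deriv β s + (p / Real.sqrt r) • β s) s := by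
    exact hA.prodMk hD
  set X : ℝ := dot3 (deriv β s) (deriv β s) with hXdef
  have hβs : dot3 (β s) (β s) = 1 := hβ1 s hs
  have hαs : dot2 (deriv α s) (deriv α s) = 1 := hα' s hs
  constructor
  · simp only [ipProd, GamAB, dot3_smul_smul, hsq, hβs, hrdef]
    rw [Real.mul_self_sqrt (by linarith [dot2_nonneg (α s)])]
    ring
  · rw [hG.deriv]
    have hexp : ipProd (deriv α s, Real.sqrt r • deriv β s + (p / Real.sqrt r) • β s)
        (deriv α s, Real.sqrt r • deriv β s + (p / Real.sqrt r) • β s)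
        = -1 + p ^ 2 / r + r * X := by
      simp only [ipProd, hαs, dot3_add_self, dot3_smul_smul, hβs, hXdef]
      have h0 : dot3 (deriv β s) (β s) = 0 := by
        have : dot3 (deriv β s) (β s) = dot3 (β s) (deriv β s) := by
          simp only [dot3]; exact Finset.sum_congr rfl fun i _ => by ring
        rw [this, hbb0]
      rw [h0]
      have h1 : p / Real.sqrt r * (p / Real.sqrt r) = p ^ 2 / r := by
        rw [div_mul_div_comm, hsq]; ring
      rw [h1, hsq]
      ring
    have hpr : p ^ 2 / r * r = p ^ 2 := div_mul_cancel₀ _ hr.ne'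
    rw [hexp]
    rw [eq_div_iff (by positivity : (r : ℝ) ^ 2 ≠ 0)]
    constructor
    · intro h
      linear_combination r * h - hpr
    · intro h
      have hrne : r ≠ 0 := hr.ne'
      field_simp
      linear_combination h
end
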